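/- For each integer n ≥ 1, the limit as x → -∞ of x^{2n} · [ h_{n-1}(x) + g_{n-1}(x) exp(x²/2) ∫_{-∞}^{x} exp(-t²/2) dt ] equals (2n-1)!. -/

import Mathlib

open Nat Finset MeasureTheory Real

noncomputable def gp (n : ℕ) (x : ℝ) : ℝ :=
  ∑ i ∈ Finset.range (n+1), ((2*n+1)! : ℝ) / ((2*(n-i))‼ * (2*i+1)!) * x^(2*i+1)

noncomputable def hp (n : ℕ) (x : ℝ) : ℝ :=
  ∑ i ∈ Finset.range (n+1), ((n+i)! * (n-i)! : ℝ) / ((2*(n-i))‼ * (2*i)!) *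
    (∑ j ∈ Finset.range (n-i+1), ((2*n+1).choose j : ℝ)) * x^(2*i)

open Filter Set

noncomputable def acoef (m i : ℕ) : ℝ := ((2*m+1)! : ℝ) / ((2*(m-i))‼ * (2*i+1)!)

noncomputable def bcoef (m i : ℕ) : ℝ := ((m+i)! * (m-i)! : ℝ) / ((2*(m-i))‼ * (2*i)!) *
    (∑ j ∈ Finset.range (m-i+1), ((2*m+1).choose j : ℝ))

lemma gp_eq (m : ℕ) (x : ℝ) : gp m x = ∑ i ∈ Finset.range (m+1), acoef m i * x^(2*i+1) := rfl

lemma hp_eq (m : ℕ) (x : ℝ) : hp m x = ∑ i ∈ Finset.range (m+1), bcoef m i * x^(2*i) := rfl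

lemma dfac_ne {k : ℕ} : ((k‼ : ℕ) : ℝ) ≠ 0 := by
  exact_mod_cast (Nat.doubleFactorial_pos k).ne'

lemma fac_ne {k : ℕ} : ((k ! : ℕ) : ℝ) ≠ 0 := by
  exact_mod_cast (Nat.factorial_pos k).ne'

lemma acoef_diag (m : ℕ) : acoef m m = 1 := by
  unfold acoef
  rw [Nat.sub_self]
  norm_num [Nat.doubleFactorial]
  exact Nat.factorial_ne_zero _

lemma acoef_zero (m : ℕ) : acoef (m+1) 0 = (2*(m:ℝ)+3) * acoef m 0 := by
  unfold acoef
  rw [Nat.sub_zero, Nat.sub_zero]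
  have e1 : (2*(m+1)+1)! = (2*m+3)*((2*m+2)*(2*m+1)!) := by
    have h : 2*(m+1)+1 = ((2*m+1)+1)+1 := by ring
    rw [h, Nat.factorial_succ, Nat.factorial_succ]
  have e2 : (2*(m+1))‼ = (2*m+2)*(2*m)‼ := by
    have h : 2*(m+1) = (2*m)+2 := by ring
    rw [h, Nat.doubleFactorial_add_two]
  rw [e1, e2]
  have h1 : ((2*m)‼ : ℝ) ≠ 0 := dfac_ne
  have h2 : (((2*0+1)! : ℕ) : ℝ) ≠ 0 := fac_ne
  push_cast
  field_simp

lemma acoef_rec (m i : ℕ) (h1 : 1 ≤ i) (h2 : i ≤ m) :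
    acoef (m+1) i = (2*(i:ℝ)+2*(m:ℝ)+3) * acoef m i + acoef m (i-1) := by
  obtain ⟨j, rfl⟩ : ∃ j, i = j+1 := ⟨i-1, by omega⟩
  obtain ⟨k, rfl⟩ : ∃ k, m = (j+1)+k := ⟨m-(j+1), by omega⟩
  unfold acoef
  have s1 : (j+1+k+1) - (j+1) = k+1 := by omega
  have s2 : (j+1+k) - (j+1) = k := by omega
  have s3 : (j+1) - 1 = j := by omega
  have s4 : (j+1+k) - j = k+1 := by omega
  rw [s1, s2, s3, s4]
  have e1 : (2*(j+1+k+1)+1)! = (2*j+2*k+5)*((2*j+2*k+4)*(2*(j+1+k)+1)!) := by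
    have h : 2*(j+1+k+1)+1 = ((2*(j+1+k)+1)+1)+1 := by ring
    rw [h, Nat.factorial_succ, Nat.factorial_succ]
    try ring
  have e2 : (2*(k+1))‼ = (2*k+2)*(2*k)‼ := by
    have h : 2*(k+1) = (2*k)+2 := by ring
    rw [h, Nat.doubleFactorial_add_two]
  have e3 : (2*(j+1)+1)! = (2*j+3)*((2*j+2)*(2*j+1)!) := by
    have h : 2*(j+1)+1 = ((2*j+1)+1)+1 := by ring
    rw [h, Nat.factorial_succ, Nat.factorial_succ]
    try ring
  rw [e1, e2, e3]
  have h1 : ((2*k)‼ : ℝ) ≠ 0 := dfac_ne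
  have h2 : (((2*j+1)! : ℕ) : ℝ) ≠ 0 := fac_ne
  push_cast
  field_simp
  ring

lemma S1 (n L : ℕ) :
    (∑ j ∈ Finset.range (L+2), (n+2).choose j) + n.choose L
      = 4 * (∑ j ∈ Finset.range (L+1), n.choose j) + n.choose (L+1) := by
  induction L with
  | zero => simp [Finset.sum_range_succ]; omega
  | succ L ih =>
    have p1 : ∑ j ∈ Finset.range (L+1+2), (n+2).choose j
        = (∑ j ∈ Finset.range (L+2), (n+2).choose j) + (n+2).choose (L+2) := by
      rw [show L+1+2 = (L+2)+1 by ring]; exact Finset.sum_range_succ _ _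
    have p2 : ∑ j ∈ Finset.range (L+1+1), n.choose j
        = (∑ j ∈ Finset.range (L+1), n.choose j) + n.choose (L+1) :=
      Finset.sum_range_succ _ _
    have p3 : n.choose (L+1+1) = n.choose (L+2) := rfl
    rw [p1, p2, p3]
    have pas : (n+2).choose (L+2) = n.choose L + 2*(n.choose (L+1)) + n.choose (L+2) := by
      rw [show n+2 = (n+1)+1 from rfl, Nat.choose_succ_succ' (n+1) (L+1),
        Nat.choose_succ_succ' n L, Nat.choose_succ_succ' n (L+1)]
      ring
    omega

lemma S2 (i L : ℕ) :
    ((i+L+1 : ℕ) : ℝ) * ((2*(i+L)+1).choose (L+1)) =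
      (i+L+1) * ((2*(i+L)+1).choose L) + i * ((2*(i+L)+2).choose (L+1)) := by
  have c1 : (((2*(i+L)+1).choose (L+1) : ℕ) : ℝ) = ((2*(i+L)+1)! : ℝ) / ((L+1)! * (2*i+L)!) := by
    rw [Nat.cast_choose ℝ (by omega : L+1 ≤ 2*(i+L)+1),
      show 2*(i+L)+1 - (L+1) = 2*i+L by omega]
  have c2 : (((2*(i+L)+1).choose L : ℕ) : ℝ) = ((2*(i+L)+1)! : ℝ) / (L ! * (2*i+L+1)!) := by
    rw [Nat.cast_choose ℝ (by omega : L ≤ 2*(i+L)+1),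
      show 2*(i+L)+1 - L = 2*i+L+1 by omega]
  have c3 : (((2*(i+L)+2).choose (L+1) : ℕ) : ℝ) = ((2*(i+L)+2)! : ℝ) / ((L+1)! * (2*i+L+1)!) := by
    rw [Nat.cast_choose ℝ (by omega : L+1 ≤ 2*(i+L)+2),
      show 2*(i+L)+2 - (L+1) = 2*i+L+1 by omega]
  rw [c1, c2, c3]
  have e1 : ((L+1)! : ℕ) = (L+1) * L ! := Nat.factorial_succ L
  have e2 : ((2*i+L+1)! : ℕ) = (2*i+L+1) * (2*i+L)! := Nat.factorial_succ _
  have e3 : ((2*(i+L)+2)! : ℕ) = (2*(i+L)+2) * (2*(i+L)+1)! := Nat.factorial_succ _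
  rw [e1, e2, e3]
  have h1 : ((L ! : ℕ) : ℝ) ≠ 0 := fac_ne
  have h2 : (((2*i+L)! : ℕ) : ℝ) ≠ 0 := fac_ne
  push_cast
  field_simp
  ring

lemma bcoef_diag (m : ℕ) : bcoef m m = 1 := by
  unfold bcoef
  rw [Nat.sub_self, show m+m = 2*m by ring]
  simp [Nat.doubleFactorial]
  exact Nat.factorial_ne_zero _

lemma bcoef_zero (m : ℕ) : bcoef (m+1) 0 = (2*(m:ℝ)+2) * bcoef m 0 := by
  have h2 : (∑ j ∈ Finset.range (m+1+1), (2*(m+1)+1).choose j)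
      = 4 * ∑ j ∈ Finset.range (m+1), (2*m+1).choose j := by
    have h := S1 (2*m+1) m
    rw [Nat.choose_symm_half, show m+2 = m+1+1 from rfl] at h
    rw [show 2*(m+1)+1 = (2*m+1)+2 by ring]
    omega
  have h3 : (∑ j ∈ Finset.range (m+1+1), ((2*(m+1)+1).choose j : ℝ))
      = 4 * ∑ j ∈ Finset.range (m+1), ((2*m+1).choose j : ℝ) := by
    exact_mod_cast h2
  unfold bcoef
  simp only [Nat.sub_zero, Nat.add_zero]
  rw [h3]
  have f1 : ((m+1)! : ℕ) = (m+1) * m ! := Nat.factorial_succ m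
  have f2 : (2*(m+1))‼ = (2*m+2)*(2*m)‼ := by
    rw [show 2*(m+1) = (2*m)+2 by ring, Nat.doubleFactorial_add_two]
  rw [f1, f2]
  have h4 : ((2*m)‼ : ℝ) ≠ 0 := dfac_ne
  have h5 : ((m ! : ℕ) : ℝ) ≠ 0 := fac_ne
  have h6 : (((2*0)! : ℕ) : ℝ) ≠ 0 := fac_ne
  push_cast
  field_simp
  ring

lemma bcoef_rec (m i : ℕ) (h1 : 1 ≤ i) (h2 : i ≤ m) :
    bcoef (m+1) i = (2*(i:ℝ)+2*(m:ℝ)+2) * bcoef m i + acoef m (i-1) := by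
  obtain ⟨j, rfl⟩ : ∃ j, i = j+1 := ⟨i-1, by omega⟩
  obtain ⟨k, rfl⟩ : ∃ k, m = (j+1)+k := ⟨m-(j+1), by omega⟩
  have key : (∑ t ∈ Finset.range (k+1+1), ((2*(j+1+k+1)+1).choose t : ℝ))
      = 4 * (∑ t ∈ Finset.range (k+1), ((2*(j+1+k)+1).choose t : ℝ))
        + (((2*(j+1+k)+1).choose (k+1) : ℝ) - ((2*(j+1+k)+1).choose k : ℝ)) := by
    have h := S1 (2*(j+1+k)+1) k
    have h' := congrArg (Nat.cast (R := ℝ)) h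
    push_cast at h'
    rw [show 2*(j+1+k+1)+1 = (2*(j+1+k)+1)+2 by ring]
    push_cast
    linarith [h']
  have c3 : ((2*(j+1+k)+2).choose (k+1) : ℝ)
      = ((2*(j+1+k)+2)! : ℝ)/((k+1)! * (2*j+k+3)!) := by
    rw [Nat.cast_choose ℝ (by omega), show 2*(j+1+k)+2-(k+1) = 2*j+k+3 by omega]
  have key2 := S2 (j+1) k
  have nz0 : ((j:ℝ)+(k:ℝ)+2) ≠ 0 := by positivity
  have hΔ : ((2*(j+1+k)+1).choose (k+1) : ℝ) - ((2*(j+1+k)+1).choose k : ℝ)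
      = ((j:ℝ)+1) * (((2*(j+1+k)+2)! : ℝ)/(((k+1)! : ℕ) * ((2*j+k+3)! : ℕ)))
        / ((j:ℝ)+(k:ℝ)+2) := by
    rw [← c3]
    push_cast at key2
    field_simp
    linarith [key2]
  unfold bcoef acoef
  rw [show j+1-1 = j by omega]
  rw [show j+1+k+1-(j+1) = k+1 by omega, show j+1+k-(j+1) = k by omega,
    show j+1+k-j = k+1 by omega, show j+1+k+1+(j+1) = 2*j+k+3 by omega,
    show j+1+k+(j+1) = 2*j+k+2 by omega]
  rw [key, hΔ]
  have f1 : ((2*(j+1+k)+2)! : ℕ) = (2*(j+1+k)+2) * (2*(j+1+k)+1)! := Nat.factorial_succ _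
  have f2 : ((2*j+k+3)! : ℕ) = (2*j+k+3) * (2*j+k+2)! := Nat.factorial_succ _
  have f3 : ((k+1)! : ℕ) = (k+1) * k ! := Nat.factorial_succ _
  have f4 : (2*(k+1))‼ = (2*k+2)*(2*k)‼ := by
    rw [show 2*(k+1) = (2*k)+2 by ring, Nat.doubleFactorial_add_two]
  have f5 : ((2*(j+1))! : ℕ) = (2*j+2) * (2*j+1)! := by
    rw [show 2*(j+1) = (2*j+1)+1 by ring, Nat.factorial_succ]
  rw [f1, f2, f3, f4, f5]
  have h4 : ((2*k)‼ : ℝ) ≠ 0 := dfac_ne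
  have h5 : ((k ! : ℕ) : ℝ) ≠ 0 := fac_ne
  have h6 : (((2*j+1)! : ℕ) : ℝ) ≠ 0 := fac_ne
  have h7 : (((2*j+k+2)! : ℕ) : ℝ) ≠ 0 := fac_ne
  have h8 : (((2*(j+1+k)+1)! : ℕ) : ℝ) ≠ 0 := fac_ne
  push_cast
  field_simp
  ring

noncomputable def dgp (m : ℕ) (x : ℝ) : ℝ :=
  ∑ i ∈ Finset.range (m+1), acoef m i * (((2*i+1 : ℕ) : ℝ) * x^(2*i))

noncomputable def dhp (m : ℕ) (x : ℝ) : ℝ :=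
  ∑ i ∈ Finset.range (m+1), bcoef m i * (((2*i : ℕ) : ℝ) * x^(2*i-1))

lemma gp_hasDeriv (m : ℕ) (x : ℝ) : HasDerivAt (fun y => gp m y) (dgp m x) x := by
  unfold dgp
  simp only [gp_eq]
  apply HasDerivAt.fun_sum
  intro i _
  simpa using (hasDerivAt_pow (2*i+1) x).const_mul (acoef m i)

lemma hp_hasDeriv (m : ℕ) (x : ℝ) : HasDerivAt (fun y => hp m y) (dhp m x) x := by
  unfold dhp
  simp only [hp_eq]
  apply HasDerivAt.fun_sum
  intro i _
  simpa using (hasDerivAt_pow (2*i) x).const_mul (bcoef m i)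

lemma gp_rec (m : ℕ) (x : ℝ) :
    gp (m+1) x = x * dgp m x + (x^2 + (2*(m:ℝ)+2)) * gp m x := by
  have step1 : gp (m+1) x = ∑ i ∈ Finset.range (m+2),
      ((if i ≤ m then (2*(i:ℝ)+2*(m:ℝ)+3) * acoef m i else 0) * x^(2*i+1)
        + (if 1 ≤ i then acoef m (i-1) else 0) * x^(2*i+1)) := by
    rw [gp_eq]
    apply Finset.sum_congr rfl
    intro i hi
    have hi' : i ≤ m+1 := by simpa [Nat.lt_succ_iff] using hi
    rcases Nat.eq_zero_or_pos i with rfl | hpos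
    · simp [acoef_zero]
    · rcases eq_or_lt_of_le hi' with rfl | hlt
      · rw [if_neg (by omega), if_pos (by omega),
          show m+1-1 = m by omega, acoef_diag, acoef_diag]
        ring
      · have him : i ≤ m := by omega
        rw [if_pos him, if_pos (show 1 ≤ i by omega), acoef_rec m i hpos him]
        ring
  rw [step1, Finset.sum_add_distrib]
  have e1 : ∑ i ∈ Finset.range (m+2),
      (if i ≤ m then (2*(i:ℝ)+2*(m:ℝ)+3) * acoef m i else 0) * x^(2*i+1)
      = ∑ i ∈ Finset.range (m+1), (2*(i:ℝ)+2*(m:ℝ)+3) * acoef m i * x^(2*i+1) := by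
    rw [Finset.sum_range_succ, if_neg (by omega)]
    rw [zero_mul, add_zero]
    apply Finset.sum_congr rfl
    intro i hi
    rw [if_pos (by simp only [Finset.mem_range] at hi; omega)]
  have e2 : ∑ i ∈ Finset.range (m+2), (if 1 ≤ i then acoef m (i-1) else 0) * x^(2*i+1)
      = ∑ i ∈ Finset.range (m+1), acoef m i * x^(2*(i+1)+1) := by
    rw [Finset.sum_range_succ']
    simp only [if_neg (by omega : ¬ (1:ℕ) ≤ 0), zero_mul, add_zero]
    apply Finset.sum_congr rfl
    intro i _
    rw [if_pos (by omega), Nat.add_sub_cancel]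
  rw [e1, e2, gp_eq, dgp, Finset.mul_sum, Finset.mul_sum, ← Finset.sum_add_distrib,
    ← Finset.sum_add_distrib]
  apply Finset.sum_congr rfl
  intro i _
  push_cast
  ring

lemma hp_rec (m : ℕ) (x : ℝ) :
    hp (m+1) x = x * dhp m x + (2*(m:ℝ)+2) * hp m x + x * gp m x := by
  have step1 : hp (m+1) x = ∑ i ∈ Finset.range (m+2),
      ((if i ≤ m then (2*(i:ℝ)+2*(m:ℝ)+2) * bcoef m i else 0) * x^(2*i)
        + (if 1 ≤ i then acoef m (i-1) else 0) * x^(2*i)) := by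
    rw [hp_eq]
    apply Finset.sum_congr rfl
    intro i hi
    have hi' : i ≤ m+1 := by simpa [Nat.lt_succ_iff] using hi
    rcases Nat.eq_zero_or_pos i with rfl | hpos
    · simp [bcoef_zero]
    · rcases eq_or_lt_of_le hi' with rfl | hlt
      · rw [if_neg (by omega), if_pos (by omega), bcoef_diag,
          show m+1-1 = m by omega, acoef_diag]
        ring
      · have him : i ≤ m := by omega
        rw [if_pos him, if_pos (show 1 ≤ i by omega), bcoef_rec m i hpos him]
        ring
  rw [step1, Finset.sum_add_distrib]
  have e1 : ∑ i ∈ Finset.range (m+2),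
      (if i ≤ m then (2*(i:ℝ)+2*(m:ℝ)+2) * bcoef m i else 0) * x^(2*i)
      = ∑ i ∈ Finset.range (m+1), (2*(i:ℝ)+2*(m:ℝ)+2) * bcoef m i * x^(2*i) := by
    rw [Finset.sum_range_succ, if_neg (by omega)]
    rw [zero_mul, add_zero]
    apply Finset.sum_congr rfl
    intro i hi
    rw [if_pos (by simp only [Finset.mem_range] at hi; omega)]
  have e2 : ∑ i ∈ Finset.range (m+2), (if 1 ≤ i then acoef m (i-1) else 0) * x^(2*i)
      = ∑ i ∈ Finset.range (m+1), acoef m i * x^(2*(i+1)) := by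
    rw [Finset.sum_range_succ']
    simp only [if_neg (by omega : ¬ (1:ℕ) ≤ 0), zero_mul, add_zero]
    apply Finset.sum_congr rfl
    intro i _
    rw [if_pos (by omega), Nat.add_sub_cancel]
  have e3 : x * dhp m x = ∑ i ∈ Finset.range (m+1), (2*(i:ℝ)) * bcoef m i * x^(2*i) := by
    rw [dhp, Finset.mul_sum]
    apply Finset.sum_congr rfl
    intro i _
    rcases Nat.eq_zero_or_pos i with rfl | hpos
    · simp
    · obtain ⟨j, rfl⟩ : ∃ j, i = j+1 := ⟨i-1, by omega⟩
      rw [show 2*(j+1)-1 = 2*j+1 by omega]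
      push_cast
      ring
  rw [e1, e2, e3, hp_eq, gp_eq, Finset.mul_sum, Finset.mul_sum, ← Finset.sum_add_distrib,
    ← Finset.sum_add_distrib, ← Finset.sum_add_distrib]
  apply Finset.sum_congr rfl
  intro i _
  push_cast
  ring

noncomputable def Fm (x : ℝ) : ℝ := Real.exp (x^2/2) * ∫ t in Set.Iic x, Real.exp (-t^2/2)

noncomputable def Phi (m : ℕ) (x : ℝ) : ℝ :=
  ∫ r in Set.Ioi (0:ℝ), Real.exp (-r) * r^m * (x^2+2*r) ^ (-(m:ℝ)-3/2)

noncomputable def Psi (m : ℕ) (x : ℝ) : ℝ :=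
  ∫ r in Set.Ioi (0:ℝ), Real.exp (-r) * r^m * (x^2+2*r) ^ (-(m:ℝ)-5/2)

lemma gamma_int (m : ℕ) : IntegrableOn (fun r : ℝ => Real.exp (-r) * r^m) (Set.Ioi 0) := by
  have h := Real.GammaIntegral_convergent (s := m+1) (by positivity)
  apply h.congr_fun ?_ measurableSet_Ioi
  intro r _
  simp only
  rw [show (m:ℝ)+1-1 = (m:ℝ) by ring, Real.rpow_natCast]

lemma base_pos (x : ℝ) {r : ℝ} (hr : 0 < r) : 0 < x^2 + 2*r := by nlinarith [sq_nonneg x]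

lemma integrand_contOn (m : ℕ) (c : ℝ) (x : ℝ) :
    ContinuousOn (fun r : ℝ => Real.exp (-r) * r^m * (x^2+2*r) ^ c) (Set.Ioi 0) := by
  apply ContinuousOn.mul
  · exact ((Real.continuous_exp.comp continuous_neg).mul (continuous_pow m)).continuousOn
  · apply ContinuousOn.rpow_const
    · fun_prop
    · intro r hr
      exact Or.inl (base_pos x hr).ne'

lemma integrand_integrable (m : ℕ) {c : ℝ} (hc : c ≤ 0) {x : ℝ} (hx : x ≠ 0) :
    IntegrableOn (fun r : ℝ => Real.exp (-r) * r^m * (x^2+2*r) ^ c) (Set.Ioi 0) := by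
  apply Integrable.mono ((gamma_int m).const_mul ((x^2) ^ c))
  · exact ((integrand_contOn m c x).aestronglyMeasurable measurableSet_Ioi)
  · rw [ae_restrict_iff' measurableSet_Ioi]
    apply Filter.Eventually.of_forall
    intro r hr
    rw [Set.mem_Ioi] at hr
    have h1 : (0:ℝ) < x^2 := by positivity
    have h2 : (x^2+2*r) ^ c ≤ (x^2) ^ c :=
      Real.rpow_le_rpow_of_nonpos h1 (by linarith) hc
    have h3 : (0:ℝ) ≤ (x^2+2*r) ^ c := (Real.rpow_pos_of_pos (by linarith) c).le
    rw [Real.norm_eq_abs, Real.norm_eq_abs]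
    rw [abs_of_nonneg (by positivity), abs_of_nonneg (by positivity)]
    calc Real.exp (-r) * r^m * (x^2+2*r) ^ c ≤ Real.exp (-r) * r^m * (x^2) ^ c := by
          apply mul_le_mul_of_nonneg_left h2 (by positivity)
      _ = (x^2) ^ c * (Real.exp (-r) * r^m) := by ring

lemma gauss_integrable : Integrable (fun t : ℝ => Real.exp (-t^2/2)) := by
  have h := integrable_exp_neg_mul_sq (show (0:ℝ) < 1/2 by norm_num)
  apply h.congr
  apply Filter.Eventually.of_forall
  intro t
  norm_num [neg_div]
  ring_nf

lemma gauss_div_sq_integrable {x : ℝ} (hx : x < 0) :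
    IntegrableOn (fun t : ℝ => Real.exp (-t^2/2) / t^2) (Set.Iic x) := by
  have hg : IntegrableOn (fun t : ℝ => (x^2)⁻¹ * Real.exp (-t^2/2)) (Set.Iic x) :=
    (gauss_integrable.integrableOn).const_mul _
  apply Integrable.mono hg
  · apply ContinuousOn.aestronglyMeasurable ?_ measurableSet_Iic
    apply ContinuousOn.div
    · fun_prop
    · fun_prop
    · intro t ht
      simp only [Set.mem_Iic] at ht
      exact pow_ne_zero 2 (by linarith)
  · rw [ae_restrict_iff' measurableSet_Iic]
    apply Filter.Eventually.of_forall
    intro t ht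
    simp only [Set.mem_Iic] at ht
    have h1 : x^2 ≤ t^2 := by nlinarith
    have hxne : x ≠ 0 := ne_of_lt hx
    have h2 : (0:ℝ) < x^2 := by positivity
    rw [Real.norm_eq_abs, Real.norm_eq_abs, abs_of_nonneg (by positivity),
      abs_of_nonneg (by positivity)]
    rw [div_eq_mul_inv, mul_comm ((x^2)⁻¹)]
    apply mul_le_mul_of_nonneg_left _ (Real.exp_pos _).le
    exact inv_anti₀ h2 h1

lemma gauss_tail {x : ℝ} (hx : x < 0) :
    ∫ t in Set.Iic x, (Real.exp (-t^2/2) + Real.exp (-t^2/2) / t^2)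
      = -Real.exp (-x^2/2)/x := by
  have deriv : ∀ t ∈ Set.Iio x, HasDerivAt (fun t : ℝ => -Real.exp (-t^2/2)/t)
      (Real.exp (-t^2/2) + Real.exp (-t^2/2) / t^2) t := by
    intro t ht
    simp only [Set.mem_Iio] at ht
    have htne : t ≠ 0 := by linarith
    have h1 : HasDerivAt (fun t : ℝ => -t^2/2) (-t) t := by
      have := (hasDerivAt_pow 2 t).neg.div_const 2
      simpa using this.congr_deriv (by ring)
    have h2 : HasDerivAt (fun t : ℝ => -Real.exp (-t^2/2)) (t * Real.exp (-t^2/2)) t := by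
      have := (h1.exp).neg
      exact this.congr_deriv (by ring)
    have h3 := h2.div (hasDerivAt_id t) htne
    apply h3.congr_deriv
    simp only [id]
    field_simp
    ring
  have cont : ContinuousWithinAt (fun t : ℝ => -Real.exp (-t^2/2)/t) (Set.Iic x) x := by
    apply ContinuousAt.continuousWithinAt
    apply ContinuousAt.div
    · fun_prop
    · fun_prop
    · linarith
  have intg : IntegrableOn (fun t : ℝ => Real.exp (-t^2/2) + Real.exp (-t^2/2) / t^2)
      (Set.Iic x) := gauss_integrable.integrableOn.add (gauss_div_sq_integrable hx)
  have lim : Filter.Tendsto (fun t : ℝ => -Real.exp (-t^2/2)/t) Filter.atBot (nhds 0) := by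
    have l1 : Filter.Tendsto (fun t : ℝ => -Real.exp (-t^2/2)) Filter.atBot (nhds 0) := by
      rw [show (0:ℝ) = -0 by norm_num]
      apply Filter.Tendsto.neg
      apply Real.tendsto_exp_atBot.comp
      apply Filter.Tendsto.atBot_div_const (by norm_num : (0:ℝ) < 2)
      have lsq : Filter.Tendsto (fun t : ℝ => t^2) Filter.atBot Filter.atTop := by
        have h := (tendsto_pow_atTop (two_ne_zero)).comp
          (tendsto_abs_atBot_atTop : Filter.Tendsto (fun t : ℝ => |t|) Filter.atBot Filter.atTop)
        apply h.congr
        intro t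
        simp [Function.comp, sq_abs]
      exact Filter.tendsto_neg_atTop_atBot.comp lsq
    have l2 : Filter.Tendsto (fun t : ℝ => t⁻¹) Filter.atBot (nhds 0) := by
      have h := (tendsto_inv_atTop_zero (𝕜 := ℝ)).comp tendsto_neg_atBot_atTop
      have h2 := h.neg
      simp only [Function.comp] at h2
      simpa [inv_neg] using h2
    have := l1.mul l2
    simpa [div_eq_mul_inv] using this
  have := MeasureTheory.integral_Iic_of_hasDerivAt_of_tendsto cont deriv intg lim
  rw [this]
  simp

lemma subst_lemma {x : ℝ} (hx : x < 0) :
    ∫ t in Set.Iic x, Real.exp (-t^2/2) / t^2 = Real.exp (-x^2/2) * Phi 0 x := by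
  set f : ℝ → ℝ := fun r => -Real.sqrt (x^2+2*r) with hf
  set f' : ℝ → ℝ := fun r => -((Real.sqrt (x^2+2*r))⁻¹) with hf'
  have hpos : ∀ r ∈ Set.Ioi (0:ℝ), 0 < x^2+2*r := by
    intro r hr
    simp only [Set.mem_Ioi] at hr
    have : x ≠ 0 := ne_of_lt hx
    positivity
  have hderiv : ∀ r ∈ Set.Ioi (0:ℝ), HasDerivWithinAt f (f' r) (Set.Ioi 0) r := by
    intro r hr
    apply HasDerivAt.hasDerivWithinAt
    have h1 : HasDerivAt (fun r : ℝ => x^2+2*r) 2 r := by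
      simpa using ((hasDerivAt_id r).const_mul (2:ℝ)).const_add (x^2)
    have h2 := (h1.sqrt (hpos r hr).ne').neg
    have hs : 0 < Real.sqrt (x^2+2*r) := Real.sqrt_pos.mpr (hpos r hr)
    have he : f' r = -(2 / (2*Real.sqrt (x^2+2*r))) := by
      simp only [hf']
      field_simp
    rw [he]
    exact h2
  have hinj : Set.InjOn f (Set.Ioi 0) := by
    intro r1 h1 r2 h2 heq
    have e0 : Real.sqrt (x^2+2*r1) = Real.sqrt (x^2+2*r2) := by
      have := congrArg Neg.neg heq
      simpa [hf] using this
    have e1 := congrArg (·^2) e0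
    simp only [Real.sq_sqrt (hpos r1 h1).le, Real.sq_sqrt (hpos r2 h2).le] at e1
    linarith
  have himg : f '' (Set.Ioi 0) = Set.Iio x := by
    ext t
    constructor
    · rintro ⟨r, hr, rfl⟩
      simp only [Set.mem_Iio, hf]
      have h1 : Real.sqrt (x^2) < Real.sqrt (x^2+2*r) := by
        apply Real.sqrt_lt_sqrt (by positivity)
        simp only [Set.mem_Ioi] at hr
        linarith
      rw [Real.sqrt_sq_eq_abs, abs_of_neg hx] at h1
      linarith
    · intro ht
      simp only [Set.mem_Iio] at ht
      refine ⟨(t^2-x^2)/2, ?_, ?_⟩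
      · simp only [Set.mem_Ioi]
        nlinarith
      · simp only [hf]
        rw [show x^2 + 2*((t^2-x^2)/2) = t^2 by ring, Real.sqrt_sq_eq_abs,
          abs_of_neg (by linarith : t < 0)]
        ring
  have key := MeasureTheory.integral_image_eq_integral_abs_deriv_smul measurableSet_Ioi
    hderiv hinj (fun t => Real.exp (-t^2/2) / t^2)
  rw [himg] at key
  rw [MeasureTheory.integral_Iic_eq_integral_Iio, key]
  rw [show Real.exp (-x^2/2) * Phi 0 x
      = ∫ r in Set.Ioi (0:ℝ), Real.exp (-x^2/2) *
        (Real.exp (-r) * r^(0:ℕ) * (x^2+2*r) ^ (-((0:ℕ):ℝ)-3/2))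
      from (MeasureTheory.integral_const_mul _ _).symm]
  apply MeasureTheory.setIntegral_congr_fun measurableSet_Ioi
  intro r hr
  have hb := hpos r hr
  have hs : 0 < Real.sqrt (x^2+2*r) := Real.sqrt_pos.mpr hb
  have hsq : (Real.sqrt (x^2+2*r))^2 = x^2+2*r := Real.sq_sqrt hb.le
  simp only [hf, hf', smul_eq_mul, Nat.cast_zero, neg_zero, zero_sub]
  rw [abs_neg, abs_of_pos (by positivity : (0:ℝ) < (Real.sqrt (x^2+2*r))⁻¹)]
  rw [neg_pow, show ((-1:ℝ))^2 = 1 by norm_num, one_mul, hsq]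
  have hrpow : (x^2+2*r) ^ (-(3/2) : ℝ) = ((x^2+2*r) * Real.sqrt (x^2+2*r))⁻¹ := by
    rw [Real.rpow_neg hb.le]
    congr 1
    rw [show ((3:ℝ)/2) = 1 + 1/2 by norm_num, Real.rpow_add hb, Real.rpow_one,
      ← Real.sqrt_eq_rpow]
  rw [hrpow]
  have hexp : Real.exp (-(x^2+2*r)/2) = Real.exp (-x^2/2) * Real.exp (-r) := by
    rw [← Real.exp_add]
    ring_nf
  rw [hexp]
  field_simp

noncomputable def Kc (m : ℕ) : ℝ := 2^m * ((2*m+1)‼ : ℕ)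

lemma Kc_succ (m : ℕ) : Kc (m+1) = (2*(2*(m:ℝ)+3)) * Kc m := by
  unfold Kc
  rw [show 2*(m+1)+1 = (2*m+1)+2 by ring, Nat.doubleFactorial_add_two]
  push_cast
  ring

lemma hp_zero (x : ℝ) : hp 0 x = 1 := by
  simp [hp_eq, bcoef, Nat.doubleFactorial]

lemma gp_zero (x : ℝ) : gp 0 x = x := by
  simp [gp_eq, acoef, Nat.doubleFactorial]

lemma F_eq {x : ℝ} (hx : x < 0) : Fm x = -1/x - Phi 0 x := by
  have h1 := gauss_tail hx
  have h2 := subst_lemma hx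
  have hsplit : ∫ t in Set.Iic x, (Real.exp (-t^2/2) + Real.exp (-t^2/2) / t^2)
      = (∫ t in Set.Iic x, Real.exp (-t^2/2)) + ∫ t in Set.Iic x, Real.exp (-t^2/2) / t^2 :=
    MeasureTheory.integral_add gauss_integrable.integrableOn (gauss_div_sq_integrable hx)
  rw [hsplit, h2] at h1
  have h3 : (∫ t in Set.Iic x, Real.exp (-t^2/2))
      = -Real.exp (-x^2/2)/x - Real.exp (-x^2/2) * Phi 0 x := by linarith
  unfold Fm
  rw [h3]
  have hee : Real.exp (x^2/2) * Real.exp (-x^2/2) = 1 := by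
    rw [← Real.exp_add, show x^2/2 + -x^2/2 = 0 by ring, Real.exp_zero]
  calc Real.exp (x^2/2) * (-Real.exp (-x^2/2)/x - Real.exp (-x^2/2) * Phi 0 x)
      = (Real.exp (x^2/2) * Real.exp (-x^2/2)) * (-1/x - Phi 0 x) := by ring
    _ = -1/x - Phi 0 x := by rw [hee]; ring

lemma main_zero {x : ℝ} (hx : x < 0) : hp 0 x + gp 0 x * Fm x = -(Kc 0) * (x * Phi 0 x) := by
  have hK : Kc 0 = 1 := by simp [Kc, Nat.doubleFactorial]
  rw [hp_zero, gp_zero, F_eq hx, hK]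
  have hxne : x ≠ 0 := ne_of_lt hx
  field_simp
  ring

lemma intF_hasDeriv (x : ℝ) :
    HasDerivAt (fun y => ∫ t in Set.Iic y, Real.exp (-t^2/2)) (Real.exp (-x^2/2)) x := by
  have cont : Continuous (fun t : ℝ => Real.exp (-t^2/2)) := by fun_prop
  have key : ∀ y : ℝ, ∫ t in Set.Iic y, Real.exp (-t^2/2)
      = (∫ t in Set.Iic 0, Real.exp (-t^2/2)) + ∫ t in (0:ℝ)..y, Real.exp (-t^2/2) := by
    intro y
    rw [← intervalIntegral.integral_Iic_sub_Iic gauss_integrable.integrableOn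
      gauss_integrable.integrableOn]
    ring
  have h2 : HasDerivAt (fun y : ℝ => (∫ t in Set.Iic 0, Real.exp (-t^2/2))
      + ∫ t in (0:ℝ)..y, Real.exp (-t^2/2)) (Real.exp (-x^2/2)) x := by
    apply HasDerivAt.const_add
    exact intervalIntegral.integral_hasDerivAt_right
      (gauss_integrable.intervalIntegrable)
      (cont.stronglyMeasurable.stronglyMeasurableAtFilter)
      cont.continuousAt
  exact h2.congr_of_eventuallyEq (Filter.Eventually.of_forall key)

lemma Fm_hasDeriv (x : ℝ) : HasDerivAt Fm (x * Fm x + 1) x := by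
  have h1 : HasDerivAt (fun y : ℝ => Real.exp (y^2/2)) (x * Real.exp (x^2/2)) x := by
    have hin : HasDerivAt (fun y : ℝ => y^2/2) x x := by
      simpa using (hasDerivAt_pow 2 x).div_const 2
    exact (hin.exp).congr_deriv (by ring)
  have h3 := h1.mul (intF_hasDeriv x)
  have hee : Real.exp (x^2/2) * Real.exp (-x^2/2) = 1 := by
    rw [← Real.exp_add, show x^2/2 + -x^2/2 = 0 by ring, Real.exp_zero]
  apply h3.congr_deriv
  unfold Fm
  rw [hee]
  ring

lemma phi_split (m : ℕ) {x : ℝ} (hx : x ≠ 0) :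
    Phi m x = x^2 * Psi m x + 2 * Phi (m+1) x := by
  have e1 : ∀ r ∈ Set.Ioi (0:ℝ), Real.exp (-r) * r^m * (x^2+2*r) ^ (-(m:ℝ)-3/2)
      = x^2 * (Real.exp (-r) * r^m * (x^2+2*r) ^ (-(m:ℝ)-5/2))
        + 2 * (Real.exp (-r) * r^(m+1) * (x^2+2*r) ^ (-((m+1:ℕ):ℝ)-3/2)) := by
    intro r hr
    have hb := base_pos x (Set.mem_Ioi.mp hr)
    have hre : (x^2+2*r) ^ (-(m:ℝ)-3/2) = (x^2+2*r) * (x^2+2*r) ^ (-(m:ℝ)-5/2) := by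
      rw [show (-(m:ℝ)-3/2) = 1 + (-(m:ℝ)-5/2) by ring, Real.rpow_add hb, Real.rpow_one]
    have hre2 : (-((m+1:ℕ):ℝ)-3/2) = (-(m:ℝ)-5/2) := by push_cast; ring
    rw [hre, hre2, pow_succ]
    ring
  unfold Phi Psi
  rw [MeasureTheory.setIntegral_congr_fun measurableSet_Ioi e1]
  rw [MeasureTheory.integral_add]
  · congr 1
    · exact MeasureTheory.integral_const_mul _ _
    · exact MeasureTheory.integral_const_mul _ _
  · exact (integrand_integrable m (by
      have : (0:ℝ) ≤ (m:ℝ) := Nat.cast_nonneg m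
      linarith) hx).const_mul _
  · exact (integrand_integrable (m+1) (by
      have : (0:ℝ) ≤ ((m+1:ℕ):ℝ) := Nat.cast_nonneg _
      linarith) hx).const_mul _

lemma Phi_hasDeriv (m : ℕ) {x : ℝ} (hx : x < 0) :
    HasDerivAt (Phi m) (-(2*(m:ℝ)+3) * x * Psi m x) x := by
  have hxne : x ≠ 0 := ne_of_lt hx
  set c : ℝ := -(m:ℝ)-3/2 with hc
  have hcneg : c ≤ 0 := by
    rw [hc]
    have : (0:ℝ) ≤ (m:ℝ) := Nat.cast_nonneg m
    linarith
  set F2' : ℝ → ℝ → ℝ := fun y r => Real.exp (-r) * r^m * (c * (y^2+2*r) ^ (c-1) * (2*y))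
    with hF2'
  have hbound_int : Integrable (fun r => Real.exp (-r) * r^m *
      ((2*(m:ℝ)+3) * ((x^2/4) ^ (c-1)) * (-3*x)))
      (volume.restrict (Set.Ioi 0)) :=
    (gamma_int m).mul_const _
  have key := hasDerivAt_integral_of_dominated_loc_of_deriv_le
    (F := fun y r => Real.exp (-r) * r^m * (y^2+2*r) ^ c) (F' := F2')
    (x₀ := x) (s := Metric.ball x (-x/2)) (μ := volume.restrict (Set.Ioi 0))
    (bound := fun r => Real.exp (-r) * r^m * ((2*(m:ℝ)+3) * ((x^2/4) ^ (c-1)) * (-3*x)))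
    (Metric.ball_mem_nhds x (by linarith : (0:ℝ) < -x/2))
    (Filter.Eventually.of_forall fun y =>
      (integrand_contOn m c y).aestronglyMeasurable measurableSet_Ioi)
    (integrand_integrable m hcneg hxne)
    (by
      apply ContinuousOn.aestronglyMeasurable ?_ measurableSet_Ioi
      apply ContinuousOn.mul
      · exact ((Real.continuous_exp.comp continuous_neg).mul (continuous_pow m)).continuousOn
      · apply ContinuousOn.mul
        · apply ContinuousOn.mul continuousOn_const
          apply ContinuousOn.rpow_const (by fun_prop)
          intro r hr
          exact Or.inl (base_pos x (Set.mem_Ioi.mp hr)).ne'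
        · exact continuousOn_const)
    (by
      rw [ae_restrict_iff' measurableSet_Ioi]
      apply Filter.Eventually.of_forall
      intro r hr y hy
      rw [Metric.mem_ball, Real.dist_eq, abs_lt] at hy
      have hy1 : y < x/2 := by linarith [hy.2]
      have hy2 : 3*x/2 < y := by linarith [hy.1]
      have hyneg : y < 0 := by linarith
      have hr' := Set.mem_Ioi.mp hr
      have hb : 0 < y^2+2*r := base_pos y hr'
      have hb2 : x^2/4 ≤ y^2+2*r := by nlinarith
      have hx24 : (0:ℝ) < x^2/4 := by positivity
      have h1 : (y^2+2*r) ^ (c-1) ≤ (x^2/4) ^ (c-1) :=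
        Real.rpow_le_rpow_of_nonpos hx24 hb2 (by linarith)
      have hcabs : |c| ≤ 2*(m:ℝ)+3 := by
        rw [hc, abs_le]
        have : (0:ℝ) ≤ (m:ℝ) := Nat.cast_nonneg m
        constructor <;> linarith
      have habs : ‖F2' y r‖ = Real.exp (-r) * r^m * (|c| * (y^2+2*r) ^ (c-1) * (2*|y|)) := by
        rw [Real.norm_eq_abs, hF2']
        simp only [abs_mul]
        rw [abs_of_nonneg (le_of_lt (Real.exp_pos (-r))),
          abs_of_nonneg (by positivity : (0:ℝ) ≤ r^m),
          abs_of_nonneg (Real.rpow_nonneg hb.le (c-1)),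
          abs_of_nonneg (by norm_num : (0:ℝ) ≤ (2:ℝ))]
      rw [habs]
      apply mul_le_mul_of_nonneg_left _ (by positivity : (0:ℝ) ≤ Real.exp (-r) * r^m)
      have t1 : |c| * (y^2+2*r) ^ (c-1) ≤ (2*(m:ℝ)+3) * (x^2/4) ^ (c-1) :=
        mul_le_mul hcabs h1 (Real.rpow_nonneg hb.le _) (by positivity)
      have t2 : 2*|y| ≤ -3*x := by
        rw [abs_of_neg hyneg]
        linarith
      exact mul_le_mul t1 t2 (by positivity) (by positivity))
    hbound_int
    (by
      rw [ae_restrict_iff' measurableSet_Ioi]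
      apply Filter.Eventually.of_forall
      intro r hr y _
      have hb : 0 < y^2+2*r := base_pos y (Set.mem_Ioi.mp hr)
      have hin : HasDerivAt (fun y : ℝ => y^2+2*r) (2*y) y := by
        simpa using (hasDerivAt_pow 2 y).add_const (2*r)
      have := (hin.rpow_const (p := c) (Or.inl hb.ne')).const_mul (Real.exp (-r) * r^m)
      apply this.congr_deriv
      rw [hF2']
      ring)
  have hval : ∫ r in Set.Ioi (0:ℝ), F2' x r = -(2*(m:ℝ)+3) * x * Psi m x := by
    have he : ∀ r ∈ Set.Ioi (0:ℝ), F2' x r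
        = (-(2*(m:ℝ)+3) * x) * (Real.exp (-r) * r^m * (x^2+2*r) ^ (-(m:ℝ)-5/2)) := by
      intro r hr
      rw [hF2']
      simp only
      rw [show c - 1 = -(m:ℝ)-5/2 by rw [hc]; ring]
      ring
    rw [MeasureTheory.setIntegral_congr_fun measurableSet_Ioi he,
      MeasureTheory.integral_const_mul]
    rfl
  rw [← hval]
  exact key.2

lemma main_ind (m : ℕ) : ∀ x : ℝ, x < 0 → hp m x + gp m x * Fm x = -(Kc m) * (x * Phi m x) := by
  induction m with
  | zero => exact fun x hx => main_zero hx
  | succ m ih =>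
    intro x hx
    have hxne : x ≠ 0 := ne_of_lt hx
    have hL : HasDerivAt (fun y => hp m y + gp m y * Fm y)
        (dhp m x + (dgp m x * Fm x + gp m x * (x * Fm x + 1))) x :=
      (hp_hasDeriv m x).add ((gp_hasDeriv m x).mul (Fm_hasDeriv x))
    have hR : HasDerivAt (fun y => -(Kc m) * (y * Phi m y))
        (-(Kc m) * (Phi m x + x * (-(2*(m:ℝ)+3) * x * Psi m x))) x := by
      have h1 := (hasDerivAt_id x).mul (Phi_hasDeriv m hx)
      have h2 := h1.const_mul (-(Kc m))
      simp only [id_eq] at h2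
      apply h2.congr_deriv
      ring
    have hEq : (fun y => hp m y + gp m y * Fm y) =ᶠ[nhds x]
        (fun y => -(Kc m) * (y * Phi m y)) := by
      filter_upwards [Iio_mem_nhds hx] with y hy
      exact ih y (Set.mem_Iio.mp hy)
    have hL' : HasDerivAt (fun y => -(Kc m) * (y * Phi m y))
        (dhp m x + (dgp m x * Fm x + gp m x * (x * Fm x + 1))) x :=
      hL.congr_of_eventuallyEq hEq.symm
    have hDeq := hL'.unique hR
    have hsplit := phi_split m hxne
    have ihx := ih x hx
    rw [hp_rec, gp_rec, Kc_succ]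
    linear_combination x * hDeq + (2*(m:ℝ)+2) * ihx - (Kc m) * (2*(m:ℝ)+3) * x * hsplit

lemma rpow_key {x r : ℝ} (hx : x < 0) (hr : 0 < r) (m : ℕ) :
    (-(x^(2*m+3))) * (x^2+2*r) ^ (-(m:ℝ)-3/2) = (1+2*r/x^2) ^ (-(m:ℝ)-3/2) := by
  have hx2 : (0:ℝ) < x^2 := by nlinarith
  have hb : 0 < x^2+2*r := base_pos x hr
  have hfact : x^2+2*r = x^2 * (1+2*r/x^2) := by
    rw [mul_add, mul_one, mul_div_assoc', mul_comm (x^2) (2*r), mul_div_assoc, div_self hx2.ne', mul_one]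
  have hq : (0:ℝ) < 2*r/x^2 := div_pos (by linarith) hx2
  have h1 : (x^2+2*r) ^ (-(m:ℝ)-3/2)
      = (x^2) ^ (-(m:ℝ)-3/2) * (1+2*r/x^2) ^ (-(m:ℝ)-3/2) := by
    rw [hfact, Real.mul_rpow hx2.le (by linarith)]
  have h2 : (x^2) ^ (-(m:ℝ)-3/2) = (-(x^(2*m+3)))⁻¹ := by
    rw [show (-(m:ℝ)-3/2) = -((m:ℝ)+3/2) by ring, Real.rpow_neg hx2.le]
    congr 1
    rw [show ((m:ℝ)+3/2) = ((m+1:ℕ):ℝ) + 1/2 by push_cast; ring,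
      Real.rpow_add hx2, Real.rpow_natCast, ← Real.sqrt_eq_rpow,
      Real.sqrt_sq_eq_abs, abs_of_neg hx]
    rw [← pow_mul]
    ring
  rw [h1, h2]
  have hne : -(x^(2*m+3)) ≠ 0 := by
    have : x^(2*m+3) < 0 := Odd.pow_neg ⟨m+1, by ring⟩ hx
    linarith
  rw [← mul_assoc, mul_inv_cancel₀ hne, one_mul]

lemma int_gamma_val (m : ℕ) :
    ∫ r in Set.Ioi (0:ℝ), Real.exp (-r) * r^m = (m ! : ℝ) := by
  have h := Real.Gamma_eq_integral (s := (m:ℝ)+1) (by positivity)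
  have h2 : Real.Gamma ((m:ℝ)+1) = (m ! : ℝ) := Real.Gamma_nat_eq_factorial m
  rw [← h2, h]
  apply MeasureTheory.setIntegral_congr_fun measurableSet_Ioi
  intro r _
  simp only
  rw [show (m:ℝ)+1-1 = (m:ℝ) by ring, Real.rpow_natCast]

lemma hKm (m : ℕ) : Kc m * (m ! : ℝ) = ((2*m+1)! : ℝ) := by
  unfold Kc
  rw [show (2*m+1)! = (2*m+1)‼ * (2*m)‼ from Nat.factorial_eq_mul_doubleFactorial (2*m),
    Nat.doubleFactorial_two_mul]
  push_cast
  ring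

lemma tendsto_final (m : ℕ) :
    Filter.Tendsto (fun x : ℝ => -(Kc m) * x^(2*m+3) * Phi m x) Filter.atBot
      (nhds ((2*m+1)! : ℝ)) := by
  have hKpos : 0 < Kc m := by
    unfold Kc
    have := Nat.doubleFactorial_pos (2*m+1)
    positivity
  have hlim : Filter.Tendsto (fun x : ℝ => ∫ r in Set.Ioi (0:ℝ),
      (-(Kc m) * x^(2*m+3)) * (Real.exp (-r) * r^m * (x^2+2*r) ^ (-(m:ℝ)-3/2)))
      Filter.atBot (nhds (∫ r in Set.Ioi (0:ℝ), Kc m * (Real.exp (-r) * r^m))) := by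
    apply MeasureTheory.tendsto_integral_filter_of_dominated_convergence
      (bound := fun r => Kc m * (Real.exp (-r) * r^m))
    · apply Filter.Eventually.of_forall
      intro x
      exact ((integrand_contOn m _ x).aestronglyMeasurable measurableSet_Ioi).const_mul _
    · filter_upwards [Filter.eventually_lt_atBot (0:ℝ)] with x hx
      rw [ae_restrict_iff' measurableSet_Ioi]
      apply Filter.Eventually.of_forall
      intro r hr
      have hr' := Set.mem_Ioi.mp hr
      have hb : 0 < x^2+2*r := base_pos x hr'
      have key := rpow_key hx hr' m
      have hone : (1:ℝ) ≤ 1+2*r/x^2 := by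
        have hx2 : (0:ℝ) < x^2 := by nlinarith
        have : 0 < 2*r/x^2 := div_pos (by linarith) hx2
        linarith
      have hle1 : (1+2*r/x^2) ^ (-(m:ℝ)-3/2) ≤ 1 := by
        apply Real.rpow_le_one_of_one_le_of_nonpos hone
        have : (0:ℝ) ≤ (m:ℝ) := Nat.cast_nonneg m
        linarith
      have hge0 : (0:ℝ) ≤ (1+2*r/x^2) ^ (-(m:ℝ)-3/2) :=
        Real.rpow_nonneg (by linarith) _
      have hre : (-(Kc m) * x^(2*m+3)) * (Real.exp (-r) * r^m * (x^2+2*r) ^ (-(m:ℝ)-3/2))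
          = Kc m * (Real.exp (-r) * r^m) * ((1+2*r/x^2) ^ (-(m:ℝ)-3/2)) := by
        rw [← key]
        ring
      have hKrm : (0:ℝ) ≤ Kc m * (Real.exp (-r) * r^m) :=
        mul_nonneg hKpos.le (by positivity)
      rw [Real.norm_eq_abs, hre, abs_mul, abs_of_nonneg hKrm, abs_of_nonneg hge0]
      calc Kc m * (Real.exp (-r) * r^m) * ((1+2*r/x^2) ^ (-(m:ℝ)-3/2))
          ≤ Kc m * (Real.exp (-r) * r^m) * 1 :=
            mul_le_mul_of_nonneg_left hle1 hKrm
        _ = Kc m * (Real.exp (-r) * r^m) := by ring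
    · exact (gamma_int m).const_mul _
    · rw [ae_restrict_iff' measurableSet_Ioi]
      apply Filter.Eventually.of_forall
      intro r hr
      have hr' := Set.mem_Ioi.mp hr
      have hbase : Filter.Tendsto (fun x : ℝ => 1+2*r/x^2) Filter.atBot (nhds 1) := by
        have hsq : Filter.Tendsto (fun x : ℝ => x^2) Filter.atBot Filter.atTop := by
          have h := (tendsto_pow_atTop (two_ne_zero)).comp
            (tendsto_abs_atBot_atTop : Filter.Tendsto (fun t : ℝ => |t|)
              Filter.atBot Filter.atTop)
          apply h.congr
          intro t
          simp [Function.comp, sq_abs]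
        have hinv : Filter.Tendsto (fun x : ℝ => (x^2)⁻¹) Filter.atBot (nhds 0) :=
          tendsto_inv_atTop_zero.comp hsq
        have := (hinv.const_mul (2*r)).const_add 1
        simp only [mul_zero, add_zero] at this
        apply this.congr
        intro x
        field_simp
      have hrpow : Filter.Tendsto (fun x : ℝ => (1+2*r/x^2) ^ (-(m:ℝ)-3/2))
          Filter.atBot (nhds 1) := by
        have hcont := (Real.continuousAt_rpow_const 1 (-(m:ℝ)-3/2)
          (Or.inl one_ne_zero)).tendsto
        have := hcont.comp hbase
        simpa [Real.one_rpow, Function.comp_def] using this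
      have := (hrpow.const_mul (Kc m * (Real.exp (-r) * r^m)))
      simp only [mul_one] at this
      apply Filter.Tendsto.congr' _ this
      filter_upwards [Filter.eventually_lt_atBot (0:ℝ)] with x hx
      rw [← rpow_key hx hr' m]
      ring
  have hval : (∫ r in Set.Ioi (0:ℝ), Kc m * (Real.exp (-r) * r^m)) = ((2*m+1)! : ℝ) := by
    rw [MeasureTheory.integral_const_mul, int_gamma_val, hKm]
  rw [hval] at hlim
  apply Filter.Tendsto.congr' _ hlim
  filter_upwards [Filter.eventually_lt_atBot (0:ℝ)] with x hx
  rw [MeasureTheory.integral_const_mul]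
  unfold Phi
  ring

theorem stmt9 (n : ℕ) (hn : 1 ≤ n) :
    Filter.Tendsto
      (fun x : ℝ => x^(2*n) * (hp (n-1) x
        + gp (n-1) x * Real.exp (x^2/2) * ∫ t in Set.Iic x, Real.exp (-t^2/2)))
      Filter.atBot (nhds ((2*n-1)!)) := by
  obtain ⟨m, rfl⟩ : ∃ m, n = m+1 := ⟨n-1, by omega⟩
  simp only [Nat.add_sub_cancel]
  rw [show 2*(m+1)-1 = 2*m+1 by omega]
  apply Filter.Tendsto.congr' _ (tendsto_final m)
  filter_upwards [Filter.eventually_lt_atBot (0:ℝ)] with x hx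
  have hmain := main_ind m x hx
  have hFm : gp m x * Real.exp (x^2/2) * ∫ t in Set.Iic x, Real.exp (-t^2/2)
      = gp m x * Fm x := by
    unfold Fm
    ring
  rw [hFm]
  linear_combination (-(x^(2*m+2))) * hmain
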